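/- Let ℓ and ℓ' be two skew lines in ℝ³ (lines not contained in a common plane), let A ⊆ ℓ and B ⊆ ℓ' be finite sets with |A| ≥ 3 and |B| ≥ 3, and let P = A ∪ B. Then P spans exactly |A| · |B| ordinary lines. -/
import Mathlib


/-- A line in `ℝ³`: an affine subspace whose direction has dimension 1. -/
def IsLine3 (L : AffineSubspace ℝ (Fin 3 → ℝ)) : Prop :=
  Module.finrank ℝ L.direction = 1

abbrev E3 := Fin 3 → ℝ

open Module AffineSubspace

lemma line_nonempty {L : AffineSubspace ℝ E3} (hL : IsLine3 L) : (L : Set E3).Nonempty := by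
  rw [AffineSubspace.nonempty_iff_ne_bot]
  rintro rfl
  rw [IsLine3, AffineSubspace.direction_bot, finrank_bot] at hL; exact one_ne_zero hL.symm

lemma line_eq_of_le {L M : AffineSubspace ℝ E3} (hL : IsLine3 L) (hM : IsLine3 M)
    (h : L ≤ M) : L = M := by
  obtain ⟨p, hp⟩ := line_nonempty hL
  have hd : L.direction = M.direction :=
    Submodule.eq_of_le_of_finrank_eq (AffineSubspace.direction_le h) (hL.trans hM.symm)
  exact (AffineSubspace.eq_iff_direction_eq_of_mem hp (h hp)).2 hd

lemma span_pair_line {x y : E3} (h : x ≠ y) : IsLine3 (affineSpan ℝ {x, y}) := by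
  rw [IsLine3, direction_affineSpan, vectorSpan_pair]
  exact finrank_span_singleton (vsub_ne_zero.2 h)


/-- A plane in `ℝ³`: an affine subspace whose direction has dimension 2. -/
def IsPlane3 (π : AffineSubspace ℝ (Fin 3 → ℝ)) : Prop :=
  Module.finrank ℝ π.direction = 2

lemma exists_plane_of_meet {ℓ ℓ' : AffineSubspace ℝ E3} (hℓ : IsLine3 ℓ) (hℓ' : IsLine3 ℓ')
    {p : E3} (hp : p ∈ ℓ) (hp' : p ∈ ℓ') :
    ∃ π : AffineSubspace ℝ E3, IsPlane3 π ∧ ℓ ≤ π ∧ ℓ' ≤ π := by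
  have hfr : finrank ℝ E3 = 3 := by simp [Module.finrank_pi]
  obtain ⟨W, hW2, hlW, hl'W⟩ :
      ∃ W : Submodule ℝ E3, finrank ℝ W = 2 ∧ ℓ.direction ≤ W ∧ ℓ'.direction ≤ W := by
    have hl1 : finrank ℝ ℓ.direction = 1 := hℓ
    have hl1' : finrank ℝ ℓ'.direction = 1 := hℓ'
    by_cases hdd : ℓ.direction = ℓ'.direction
    · obtain ⟨m, hm⟩ := Submodule.exists_of_finrank_lt ℓ.direction
        (by rw [hl1, hfr]; norm_num)
      have hm0 : m ≠ 0 := by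
        rintro rfl
        exact hm 1 one_ne_zero (by simpa using ℓ.direction.zero_mem)
      refine ⟨ℓ.direction ⊔ ℝ ∙ m, ?_, le_sup_left, hdd ▸ le_sup_left⟩
      have hinf : ℓ.direction ⊓ (ℝ ∙ m) = ⊥ := by
        rw [Submodule.eq_bot_iff]
        rintro x ⟨hx1, hx2⟩
        obtain ⟨r, rfl⟩ := Submodule.mem_span_singleton.1 hx2
        rcases eq_or_ne r 0 with rfl | hr
        · simp
        · exact absurd hx1 (hm r hr)
      have := Submodule.finrank_sup_add_finrank_inf_eq ℓ.direction (ℝ ∙ m)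
      rw [hinf, finrank_bot, hl1, finrank_span_singleton hm0] at this
      simp only [add_zero] at this
      exact this
    · refine ⟨ℓ.direction ⊔ ℓ'.direction, ?_, le_sup_left, le_sup_right⟩
      have hinf : ℓ.direction ⊓ ℓ'.direction = ⊥ := by
        by_contra hne
        have h1 : 1 ≤ finrank ℝ ↥(ℓ.direction ⊓ ℓ'.direction) := by
          rw [Nat.one_le_iff_ne_zero]
          simpa [Submodule.finrank_eq_zero] using hne
        have e1 : ℓ.direction ⊓ ℓ'.direction = ℓ.direction :=
          Submodule.eq_of_le_of_finrank_le inf_le_left (by rw [hl1]; exact h1)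
        have e2 : ℓ.direction ⊓ ℓ'.direction = ℓ'.direction :=
          Submodule.eq_of_le_of_finrank_le inf_le_right (by rw [hl1']; exact h1)
        exact hdd (e1 ▸ e2)
      have := Submodule.finrank_sup_add_finrank_inf_eq ℓ.direction ℓ'.direction
      rw [hinf, finrank_bot, hl1, hl1'] at this
      simp only [add_zero] at this
      exact this
  refine ⟨AffineSubspace.mk' p W, ?_, ?_, ?_⟩
  · rw [IsPlane3, AffineSubspace.direction_mk']; exact hW2
  · intro x hx
    exact AffineSubspace.mem_mk'.2 (hlW (AffineSubspace.vsub_mem_direction hx hp))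
  · intro x hx
    exact AffineSubspace.mem_mk'.2 (hl'W (AffineSubspace.vsub_mem_direction hx hp'))


/-- The ordinary lines of a point set: lines containing exactly two points of the set. -/
def ordinaryLines3 (P : Set (Fin 3 → ℝ)) : Set (AffineSubspace ℝ (Fin 3 → ℝ)) :=
  {L | IsLine3 L ∧ (P ∩ ↑L).ncard = 2}

lemma key_aux {ℓ : AffineSubspace ℝ E3} (hℓ : IsLine3 ℓ) {x y c : E3}
    (hx : x ∈ ℓ) (hc : c ∈ ℓ) (hcx : c ≠ x) (hxy : x ≠ y)
    (hcL : c ∈ affineSpan ℝ ({x, y} : Set E3)) : y ∈ ℓ := by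
  have hL := span_pair_line hxy
  have h1 : affineSpan ℝ ({x, c} : Set E3) ≤ ℓ := affineSpan_le.2 (by
    intro z hz
    rcases hz with rfl | hz
    · exact hx
    · rw [Set.mem_singleton_iff] at hz; subst hz; exact hc)
  have h2 : affineSpan ℝ ({x, c} : Set E3) ≤ affineSpan ℝ ({x, y} : Set E3) :=
    affineSpan_le.2 (by
      intro z hz
      rcases hz with rfl | hz
      · exact subset_affineSpan ℝ _ (Set.mem_insert _ _)
      · rw [Set.mem_singleton_iff] at hz; subst hz; exact hcL)
  have hsp := span_pair_line (Ne.symm hcx)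
  have e1 := line_eq_of_le hsp hℓ h1
  have e2 := line_eq_of_le hsp hL h2
  have e3 : ℓ = affineSpan ℝ ({x, y} : Set E3) := e1.symm.trans e2
  rw [e3]
  exact subset_affineSpan ℝ _ (Set.mem_insert_of_mem _ rfl)


theorem statement15 (ℓ ℓ' : AffineSubspace ℝ (Fin 3 → ℝ))
    (hℓ : IsLine3 ℓ) (hℓ' : IsLine3 ℓ')
    (hskew : ¬ ∃ π : AffineSubspace ℝ (Fin 3 → ℝ), IsPlane3 π ∧ ℓ ≤ π ∧ ℓ' ≤ π)
    (A B : Finset (Fin 3 → ℝ))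
    (hA : (↑A : Set (Fin 3 → ℝ)) ⊆ ↑ℓ) (hB : (↑B : Set (Fin 3 → ℝ)) ⊆ ↑ℓ')
    (hAcard : 3 ≤ A.card) (hBcard : 3 ≤ B.card) :
    (ordinaryLines3 ((↑A : Set (Fin 3 → ℝ)) ∪ ↑B)).ncard = A.card * B.card := by
  classical
  set P : Set E3 := ↑A ∪ ↑B with hPdef
  have hdisj : ∀ p : E3, p ∈ ℓ → p ∉ ℓ' := fun p hp hp' =>
    hskew (exists_plane_of_meet hℓ hℓ' hp hp')
  have hne : ∀ a ∈ A, ∀ b ∈ B, a ≠ b := by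
    rintro a ha b hb rfl
    exact hdisj a (hA ha) (hB hb)
  have key : ∀ a ∈ A, ∀ b ∈ B, P ∩ ↑(affineSpan ℝ ({a, b} : Set E3)) = {a, b} := by
    intro a ha b hb
    apply Set.Subset.antisymm
    · rintro c ⟨hcP, hcL⟩
      rcases hcP with hcA | hcB
      · rcases eq_or_ne c a with rfl | hca
        · exact Set.mem_insert _ _
        · exact absurd (key_aux hℓ (hA ha) (hA hcA) hca (hne a ha b hb) hcL)
            (fun hbl => hdisj b hbl (hB hb))
      · rcases eq_or_ne c b with rfl | hcb
        · exact Set.mem_insert_of_mem _ rfl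
        · rw [Set.pair_comm] at hcL
          exact absurd (key_aux hℓ' (hB hb) (hB hcB) hcb (Ne.symm (hne a ha b hb)) hcL)
            (fun hal => hdisj a (hA ha) hal)
    · rintro c hc
      rcases hc with rfl | hc
      · exact ⟨Or.inl ha, subset_affineSpan ℝ _ (Set.mem_insert _ _)⟩
      · rw [Set.mem_singleton_iff] at hc; subst hc
        exact ⟨Or.inr hb, subset_affineSpan ℝ _ (Set.mem_insert_of_mem _ rfl)⟩
  have hPfin : P.Finite := (A.finite_toSet.union B.finite_toSet)
  have hmain : ordinaryLines3 P =
      ↑((A ×ˢ B).image fun q => affineSpan ℝ ({q.1, q.2} : Set E3)) := by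
    ext L
    constructor
    · rintro ⟨hLline, hcard⟩
      obtain ⟨x, y, hxy, hset⟩ := Set.ncard_eq_two.1 hcard
      have hx : x ∈ P ∩ ↑L := hset ▸ Set.mem_insert _ _
      have hy : y ∈ P ∩ ↑L := hset ▸ Set.mem_insert_of_mem _ rfl
      have hfin : (P ∩ ↑L).Finite := hPfin.subset Set.inter_subset_left
      have hLeq : L = affineSpan ℝ ({x, y} : Set E3) :=
        (line_eq_of_le (span_pair_line hxy) hLline (affineSpan_le.2 (by
          intro z hz
          rcases hz with rfl | hz
          · exact hx.2
          · rw [Set.mem_singleton_iff] at hz; subst hz; exact hy.2))).symm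
      have absurd_same : ∀ (M : AffineSubspace ℝ E3) (C : Finset E3), IsLine3 M →
          (↑C : Set E3) ⊆ ↑M → 3 ≤ C.card → (↑C : Set E3) ⊆ P → x ∈ M → y ∈ M → False := by
        intro M C hM hCM hC3 hCP hxM hyM
        have hLM : L = M := by
          rw [hLeq]
          refine line_eq_of_le (span_pair_line hxy) hM (affineSpan_le.2 ?_)
          intro z hz
          rcases hz with rfl | hz
          · exact hxM
          · rw [Set.mem_singleton_iff] at hz; subst hz; exact hyM
        have hsub : (↑C : Set E3) ⊆ P ∩ ↑L := fun c hc => ⟨hCP hc, by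
          rw [hLM]; exact hCM hc⟩
        have h3 : 3 ≤ (P ∩ ↑L).ncard := by
          calc 3 ≤ C.card := hC3
          _ = (↑C : Set E3).ncard := (Set.ncard_coe_finset C).symm
          _ ≤ _ := Set.ncard_le_ncard hsub hfin
        omega
      rcases hx.1 with hxA | hxB <;> rcases hy.1 with hyA | hyB
      · exact (absurd_same ℓ A hℓ hA hAcard (fun c hc => Or.inl hc) (hA hxA) (hA hyA)).elim
      · rw [Finset.mem_coe, Finset.mem_image]
        exact ⟨(x, y), Finset.mem_product.2 ⟨Finset.mem_coe.1 hxA, Finset.mem_coe.1 hyB⟩,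
          hLeq.symm⟩
      · rw [Finset.mem_coe, Finset.mem_image]
        refine ⟨(y, x), Finset.mem_product.2 ⟨Finset.mem_coe.1 hyA, Finset.mem_coe.1 hxB⟩, ?_⟩
        rw [hLeq, Set.pair_comm x y]
      · exact (absurd_same ℓ' B hℓ' hB hBcard (fun c hc => Or.inr hc) (hB hxB) (hB hyB)).elim
    · intro hL
      rw [Finset.mem_coe, Finset.mem_image] at hL
      obtain ⟨⟨a, b⟩, hab, rfl⟩ := hL
      rw [Finset.mem_product] at hab
      refine ⟨span_pair_line (hne a hab.1 b hab.2), ?_⟩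
      rw [key a hab.1 b hab.2]
      exact Set.ncard_pair (hne a hab.1 b hab.2)
  rw [hmain, Set.ncard_coe_finset]
  rw [Finset.card_image_of_injOn, Finset.card_product]
  rintro ⟨a, b⟩ hab ⟨a', b'⟩ hab' heq
  simp only [Finset.mem_coe, Finset.mem_product] at hab hab'
  have h1 := key a hab.1 b hab.2
  have h2 := key a' hab'.1 b' hab'.2
  have heq' : affineSpan ℝ ({a, b} : Set E3) = affineSpan ℝ ({a', b'} : Set E3) := heq
  rw [heq'] at h1
  rw [h1] at h2
  have ha' : a ∈ ({a', b'} : Set E3) := h2 ▸ Set.mem_insert _ _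
  have hb' : b ∈ ({a', b'} : Set E3) := h2 ▸ Set.mem_insert_of_mem _ rfl
  have ea : a = a' := by
    rcases ha' with h | h
    · exact h
    · rw [Set.mem_singleton_iff] at h
      exact absurd h (hne a hab.1 b' hab'.2)
  have eb : b = b' := by
    rcases hb' with h | h
    · exact absurd h.symm (hne a' hab'.1 b hab.2)
    · rwa [Set.mem_singleton_iff] at h
  simp [ea, eb]
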